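/- Let V be a finite type with n = |V| and let F be a nonempty superset-closed family of finsets of V. For every S ∈ F, the degree of S in the TAR graph of F is at least n − |S|, with equality if and only if S is a minimal member of F. Moreover, the minimum degree of the TAR graph of F equals n − X̄(F), where X̄(F) is the maximum cardinality of a minimal member of F. -/

import Mathlib

variable {V : Type*} [Fintype V] [DecidableEq V]

/-- A family of finsets is superset-closed if it is closed under taking supersets. -/
def SupersetClosed (F : Finset (Finset V)) : Prop :=
  ∀ ⦃S T : Finset V⦄, S ∈ F → S ⊆ T → T ∈ F

/-- A minimal member of a family: a member no proper subset of which is a member. -/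
def IsMinimalMem (F : Finset (Finset V)) (M : Finset V) : Prop :=
  M ∈ F ∧ ∀ M' : Finset V, M' ⊂ M → M' ∉ F

/-- The TAR graph of a family of finsets: vertices are the members of the family,
two members being adjacent iff their symmetric difference has exactly one element. -/
def TARGraph (F : Finset (Finset V)) : SimpleGraph {S : Finset V // S ∈ F} where
  Adj S T := (symmDiff S.1 T.1).card = 1
  symm := ⟨fun S T (h : (symmDiff S.1 T.1).card = 1) =>
    show (symmDiff T.1 S.1).card = 1 by rwa [symmDiff_comm] at h⟩
  loopless := ⟨fun S (h : (symmDiff S.1 S.1).card = 1) => by simp [symmDiff_self] at h⟩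

instance (F : Finset (Finset V)) : DecidableRel (TARGraph F).Adj :=
  fun S T => inferInstanceAs (Decidable ((symmDiff S.1 T.1).card = 1))

/-!
Every neighbour of `S` in the TAR graph is `S ∆ {v}` for a single `v`. If `T ⊆ S` is a member,
then `S ∆ {v} ⊇ T` for every `v ∉ T`, so superset-closedness makes all these `n - |T|` flips
neighbours of `S`. Taking `T = S` gives the lower bound `n - |S|`; it is attained exactly when
no `S.erase v` is a member, which for a superset-closed family is minimality of `S`. Taking for
`T` a minimal member below `S` gives `deg S ≥ n - X̄`, attained at a largest minimal member.
-/

open Finset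

namespace Finset

variable {α : Type*} [DecidableEq α] {S : Finset α} {v : α}

theorem symmDiff_singleton_of_mem (h : v ∈ S) : symmDiff S {v} = S.erase v := by
  ext a
  by_cases ha : a = v <;> simp [mem_symmDiff, ha, h]

theorem symmDiff_singleton_of_notMem (h : v ∉ S) : symmDiff S {v} = insert v S := by
  ext a
  by_cases ha : a = v <;> simp [mem_symmDiff, ha, h]

end Finset

section Family

variable {α : Type*} {F : Finset (Finset α)}

theorem isMinimalMem_iff_minimal {M : Finset α} : IsMinimalMem F M ↔ Minimal (· ∈ F) M := by
  rw [minimal_iff_forall_lt]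
  exact Iff.rfl

theorem exists_isMinimalMem_subset {S : Finset α} (hS : S ∈ F) :
    ∃ M ⊆ S, IsMinimalMem F M := by
  obtain ⟨M, hMS, hM⟩ := exists_minimal_le_of_wellFoundedLT (· ∈ F) S hS
  exact ⟨M, hMS, isMinimalMem_iff_minimal.2 hM⟩

variable [DecidableEq α]

theorem SupersetClosed.isMinimalMem_iff (hsup : SupersetClosed F) {S : Finset α} :
    IsMinimalMem F S ↔ S ∈ F ∧ ∀ v ∈ S, S.erase v ∉ F := by
  rw [isMinimalMem_iff_minimal]
  exact minimal_iff_forall_erase fun _ _ ht hts => hsup ht hts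

theorem SupersetClosed.symmDiff_singleton_mem (hsup : SupersetClosed F) {S T : Finset α}
    (hT : T ∈ F) (hTS : T ⊆ S) {v : α} (hv : v ∉ T) : symmDiff S {v} ∈ F := by
  by_cases hvS : v ∈ S
  · rw [symmDiff_singleton_of_mem hvS]
    exact hsup hT (subset_erase.2 ⟨hTS, hv⟩)
  · rw [symmDiff_singleton_of_notMem hvS]
    exact hsup hT (hTS.trans (subset_insert v S))

end Family

namespace TARGraph

variable {F : Finset (Finset V)}

theorem degree_eq_card_filter (S : Finset V) (hS : S ∈ F) :
    (TARGraph F).degree ⟨S, hS⟩ = #{v | symmDiff S {v} ∈ F} := by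
  symm
  refine card_bij (fun v hv => ⟨symmDiff S {v}, (mem_filter.1 hv).2⟩)
    (fun v _ => ?adj) (fun v _ w _ hvw => ?inj) (fun T hT => ?surj)
  case adj =>
    rw [SimpleGraph.mem_neighborFinset]
    show #(symmDiff S (symmDiff S {v})) = 1
    rw [symmDiff_symmDiff_cancel_left, card_singleton]
  case inj =>
    simpa using symmDiff_right_injective S (congrArg Subtype.val hvw)
  case surj =>
    obtain ⟨v, hv⟩ := card_eq_one.1 ((SimpleGraph.mem_neighborFinset _ _ _).1 hT)
    have hTv : symmDiff S {v} = T.1 := by rw [← hv, symmDiff_symmDiff_cancel_left]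
    exact ⟨v, mem_filter.2 ⟨mem_univ v, hTv ▸ T.2⟩, Subtype.ext hTv⟩

theorem compl_subset_filter_symmDiff_mem (hsup : SupersetClosed F) {S T : Finset V}
    (hT : T ∈ F) (hTS : T ⊆ S) :
    Tᶜ ⊆ ({v | symmDiff S {v} ∈ F} : Finset V) := fun v hv =>
  mem_filter.2 ⟨mem_univ v, hsup.symmDiff_singleton_mem hT hTS (mem_compl.1 hv)⟩

theorem card_sub_card_le_degree (hsup : SupersetClosed F) {S T : Finset V} (hS : S ∈ F)
    (hT : T ∈ F) (hTS : T ⊆ S) :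
    Fintype.card V - #T ≤ (TARGraph F).degree ⟨S, hS⟩ := by
  rw [degree_eq_card_filter, ← card_compl]
  exact card_le_card (compl_subset_filter_symmDiff_mem hsup hT hTS)

theorem degree_eq_iff_isMinimalMem (hsup : SupersetClosed F) {S : Finset V} (hS : S ∈ F) :
    (TARGraph F).degree ⟨S, hS⟩ = Fintype.card V - #S ↔ IsMinimalMem F S := by
  have hcompl := compl_subset_filter_symmDiff_mem hsup hS subset_rfl
  have hcard := card_le_card hcompl
  rw [degree_eq_card_filter, ← card_compl, hsup.isMinimalMem_iff, and_iff_right hS]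
  calc #{v | symmDiff S {v} ∈ F} = #Sᶜ ↔ Sᶜ = ({v | symmDiff S {v} ∈ F} : Finset V) := by
        rw [← eq_iff_card_le_of_subset hcompl]; omega
    _ ↔ ({v | symmDiff S {v} ∈ F} : Finset V) ⊆ Sᶜ := ⟨fun h => h.ge, hcompl.antisymm⟩
    _ ↔ ∀ v ∈ S, S.erase v ∉ F := by
      simp only [subset_iff, mem_filter, mem_univ, true_and, mem_compl]
      refine forall_congr' fun v => ?_
      by_cases hv : v ∈ S <;> simp [hv, symmDiff_singleton_of_mem]

theorem minDegree_eq (hsup : SupersetClosed F) {xbar : ℕ}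
    (hxbar : IsGreatest {k : ℕ | ∃ M : Finset V, IsMinimalMem F M ∧ M.card = k} xbar) :
    (TARGraph F).minDegree = Fintype.card V - xbar := by
  obtain ⟨M, hM, rfl⟩ := hxbar.1
  have : Nonempty F := ⟨⟨M, hM.1⟩⟩
  apply le_antisymm
  · rw [← (degree_eq_iff_isMinimalMem hsup hM.1).2 hM]
    exact SimpleGraph.minDegree_le_degree _ _
  · refine SimpleGraph.le_minDegree_of_forall_le_degree _ _ fun S => ?_
    obtain ⟨N, hNS, hN⟩ := exists_isMinimalMem_subset S.2
    exact (Nat.sub_le_sub_left (hxbar.2 ⟨N, hN, rfl⟩) _).trans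
      (card_sub_card_le_degree hsup S.2 hN.1 hNS)

end TARGraph

theorem stmt2_general (F : Finset (Finset V)) (hsup : SupersetClosed F)
    (xbar : ℕ)
    (hxbar : IsGreatest {k : ℕ | ∃ M : Finset V, IsMinimalMem F M ∧ M.card = k} xbar) :
    (∀ (S : Finset V) (hS : S ∈ F),
      Fintype.card V - S.card ≤ (TARGraph F).degree ⟨S, hS⟩ ∧
      ((TARGraph F).degree ⟨S, hS⟩ = Fintype.card V - S.card ↔ IsMinimalMem F S)) ∧
    (TARGraph F).minDegree = Fintype.card V - xbar :=
  ⟨fun S hS => ⟨TARGraph.card_sub_card_le_degree hsup hS hS subset_rfl,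
    TARGraph.degree_eq_iff_isMinimalMem hsup hS⟩, TARGraph.minDegree_eq hsup hxbar⟩

theorem stmt2 (F : Finset (Finset V)) (hne : F.Nonempty) (hsup : SupersetClosed F)
    (xbar : ℕ)
    (hxbar : IsGreatest {k : ℕ | ∃ M : Finset V, IsMinimalMem F M ∧ M.card = k} xbar) :
    (∀ (S : Finset V) (hS : S ∈ F),
      Fintype.card V - S.card ≤ (TARGraph F).degree ⟨S, hS⟩ ∧
      ((TARGraph F).degree ⟨S, hS⟩ = Fintype.card V - S.card ↔ IsMinimalMem F S)) ∧
    (TARGraph F).minDegree = Fintype.card V - xbar :=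
  stmt2_general F hsup xbar hxbar
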